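/- (Alexandrov's theorem) Let n ≥ 1 and let f : ℝ^n → ℝ be convex. Then for Lebesgue-almost every x ∈ ℝ^n there exist p ∈ ℝ^n and a symmetric n×n real matrix A such that f(x+h) = f(x) + ⟨p, h⟩ + (1/2)⟨A h, h⟩ + o(|h|²) as h → 0. -/

import Mathlib

/-!
Fix a selection `G` of subgradients of `f` and a point `x` where `f` has a gradient `p`. If `G`
is differentiable at `x`, integrating the subgradient inequality along `[x, x + h]` gives the
expansion with `A = G'(x)`. Differentiability of `G` comes from the proximal map
`P = (I + ∂f)⁻¹`: it is `1`-Lipschitz and is the gradient of the convex function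
`y ↦ sup_w (⟪w, y⟫ - f w - ‖w‖² / 2)`, so its derivative is symmetric wherever it exists. Since
`P (z + G z) = z`, the map `z ↦ z + G z` is a right inverse of `P`, hence differentiable at `x`
with derivative `P'(x + p)⁻¹` as soon as `P'(x + p)` exists and is invertible; then
`A = P'(x + p)⁻¹ - I` is symmetric. The points `x` where this fails lie in the image under `P` of
the non-differentiability set of `P`, null by Rademacher and mapped to a null set as `P` is
Lipschitz, or in the image of the critical set of `P`, null by Sard.
-/

open scoped RealInnerProductSpace Topology
open Filter Asymptotics Metric MeasureTheory

noncomputable section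

/-- Euclidean space ℝ^n. -/
abbrev E (n : ℕ) : Type := EuclideanSpace ℝ (Fin n)

open Set

open Finset in
theorem abs_sub_le_of_forall_abs_sub_le_mul_add_sq {ψ : ℝ → ℝ} {a b ε K : ℝ} (hab : a ≤ b)
    (h : ∀ t ∈ Icc a b, ∀ u ∈ Icc a b, |ψ u - ψ t| ≤ ε * |u - t| + K * (u - t) ^ 2) :
    |ψ b - ψ a| ≤ ε * (b - a) := by
  have hm : ∀ m : ℕ, |ψ b - ψ a| ≤ ε * (b - a) + K * (b - a) ^ 2 * (1 / ((m : ℝ) + 1)) := by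
    intro m
    set d := (b - a) / (m + 1)
    set t : ℕ → ℝ := fun j => a + j * d
    have hd : 0 ≤ d := div_nonneg (sub_nonneg.2 hab) (by positivity)
    have hstep : ∀ j, t (j + 1) - t j = d := fun j => by simp only [t]; push_cast; ring
    have hmem : ∀ j ≤ m + 1, t j ∈ Icc a b := by
      intro j hj
      refine ⟨le_add_of_nonneg_right (by positivity), ?_⟩
      have : (j : ℝ) * d ≤ (m + 1) * d := mul_le_mul_of_nonneg_right (by exact_mod_cast hj) hd
      rw [mul_div_cancel₀ _ (by positivity)] at this
      simp only [t]
      linarith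
    have htel : ψ b - ψ a = ∑ j ∈ range (m + 1), (ψ (t (j + 1)) - ψ (t j)) := by
      rw [sum_range_sub (fun j => ψ (t j))]
      simp only [t, d]
      push_cast
      rw [zero_mul, add_zero, mul_div_cancel₀ _ (by positivity), add_sub_cancel]
    calc |ψ b - ψ a| ≤ ∑ j ∈ range (m + 1), |ψ (t (j + 1)) - ψ (t j)| :=
          htel ▸ abs_sum_le_sum_abs _ _
      _ ≤ ∑ j ∈ range (m + 1), (ε * d + K * d ^ 2) := by
          refine sum_le_sum fun j hj => ?_
          have hj := mem_range.1 hj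
          have := h _ (hmem j hj.le) _ (hmem (j + 1) hj)
          rwa [hstep, abs_of_nonneg hd] at this
      _ = ε * (b - a) + K * (b - a) ^ 2 * (1 / ((m : ℝ) + 1)) := by
          rw [sum_const, card_range, nsmul_eq_mul]
          simp only [d]
          push_cast
          field_simp
  have hlim := (tendsto_one_div_add_atTop_nhds_zero_nat.const_mul (K * (b - a) ^ 2)).const_add
    (ε * (b - a))
  rw [mul_zero, add_zero] at hlim
  exact ge_of_tendsto' hlim hm

theorem nonneg_of_forall_nonneg_add_mul {a b : ℝ} (h : ∀ t ∈ Ioo (0 : ℝ) 1, 0 ≤ a + t * b) :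
    0 ≤ a := by
  have hlim : Tendsto (fun t : ℝ => a + t * b) (𝓝[>] 0) (𝓝 a) :=
    tendsto_nhdsWithin_of_tendsto_nhds ((continuous_const.add (continuous_id.mul
      continuous_const)).tendsto' 0 a (by simp))
  exact ge_of_tendsto hlim (mem_of_superset (Ioo_mem_nhdsGT zero_lt_one) h)

section Subgradient

variable {V : Type*} [NormedAddCommGroup V] [InnerProductSpace ℝ V] {f : V → ℝ}

def HasSubgradientAt (f : V → ℝ) (g z : V) : Prop := ∀ w, f z + ⟪g, w - z⟫ ≤ f w

theorem HasSubgradientAt.inner_sub_sub_nonneg {g g' z z' : V} (h : HasSubgradientAt f g z)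
    (h' : HasSubgradientAt f g' z') : 0 ≤ ⟪g - g', z - z'⟫ := by
  have h₁ := h z'
  have h₂ := h' z
  rw [← neg_sub z z', inner_neg_right] at h₁
  rw [inner_sub_left]
  linarith

theorem HasSubgradientAt.inner_sub_le {g p x z : V} (hx : HasSubgradientAt f p x)
    (hz : HasSubgradientAt f g z) (u : V) : ⟪g - p, u⟫ ≤ f (z + u) - f x - ⟪p, z + u - x⟫ := by
  have h₁ := hx z
  have h₂ := hz (z + u)
  rw [add_sub_cancel_left] at h₂
  rw [inner_sub_left, show z + u - x = (z - x) + u by abel, inner_add_right]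
  linarith

theorem ConvexOn.exists_hasSubgradientAt [CompleteSpace V] (hf : ConvexOn ℝ univ f)
    (hc : Continuous f) (z : V) : ∃ g, HasSubgradientAt f g z := by
  obtain ⟨ℓ, hℓ⟩ := geometric_hahn_banach_open_point hf.convex_strict_epigraph
    (by simpa using isOpen_lt (hc.comp continuous_fst) continuous_snd) (x := (z, f z)) (by simp)
  set α := ℓ (0, 1)
  set L := ℓ.comp (.inl ℝ V ℝ)
  have hℓ' : ∀ w t, f w < t → L w + t * α < L z + f z * α := by
    intro w t ht
    have key : ∀ v s, ℓ (v, s) = L v + s * α := fun v s => by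
      rw [show ((v, s) : V × ℝ) = (v, 0) + s • (0, 1) by simp, map_add, map_smul, smul_eq_mul]
      rfl
    simpa [key] using hℓ (w, t) ⟨mem_univ _, ht⟩
  have hα : α < 0 := by
    have := hℓ' z (f z + 1) (by linarith)
    linarith
  refine ⟨(InnerProductSpace.toDual ℝ V).symm ((-α)⁻¹ • L), fun w => ?_⟩
  have hw : L w + f w * α ≤ L z + f z * α := by
    refine le_of_forall_pos_lt_add fun ε hε => ?_
    have := hℓ' w (f w + ε / -α) (by have : 0 < ε / -α := div_pos hε (by linarith); linarith)
    have e : ε / -α * α = -ε := by field_simp [hα.ne]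
    linarith
  rw [InnerProductSpace.toDual_symm_apply]
  simp only [FunLike.coe_smul, Pi.smul_apply, map_sub, smul_eq_mul]
  have : (-α)⁻¹ * (L w - L z) ≤ f w - f z := by
    rw [inv_mul_le_iff₀ (by linarith)]; linarith
  linarith

theorem HasGradientAt.hasSubgradientAt [CompleteSpace V] (hf : ConvexOn ℝ univ f) {p x : V}
    (h : HasGradientAt f p x) : HasSubgradientAt f p x := by
  intro w
  have h₀ : HasFDerivAt f (InnerProductSpace.toDual ℝ V p) (AffineMap.lineMap x w (0 : ℝ)) := by
    rwa [AffineMap.lineMap_apply_zero]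
  have := (hf.comp_affineMap (AffineMap.lineMap x w)).le_slope_of_hasDerivAt
    (mem_univ 0) (mem_univ 1) zero_lt_one (h₀.comp_hasDerivAt (0 : ℝ) AffineMap.hasDerivAt_lineMap)
  simp only [InnerProductSpace.toDual_apply_apply, slope_def_field, Function.comp_apply,
    AffineMap.lineMap_apply_one, AffineMap.lineMap_apply_zero, sub_zero, div_one] at this
  linarith

theorem HasGradientAt.tendsto_subgradient [CompleteSpace V] (hf : ConvexOn ℝ univ f) {p x : V}
    (hx : HasGradientAt f p x) {G : V → V} (hG : ∀ z, HasSubgradientAt f (G z) z) :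
    Tendsto G (𝓝 x) (𝓝 p) := by
  rw [Metric.tendsto_nhds]
  intro ε hε
  obtain ⟨ρ, hρ, hsmall⟩ := Metric.eventually_nhds_iff.1
    ((hasGradientAt_iff_isLittleO.1 hx).def (show 0 < ε / 4 by positivity))
  filter_upwards [ball_mem_nhds x (half_pos hρ)] with z hz
  rw [mem_ball, dist_eq_norm] at hz
  set v := G z - p
  set u := (ρ / 2 / ‖v‖) • v
  have hu : ‖u‖ ≤ ρ / 2 := by
    rcases eq_or_ne ‖v‖ 0 with hv | hv
    · simp only [u, hv, div_zero, zero_smul, norm_zero]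
      positivity
    · rw [norm_smul, Real.norm_of_nonneg (by positivity), div_mul_cancel₀ _ hv]
  have hvu : ⟪v, u⟫ = ρ / 2 * ‖v‖ := by
    rw [real_inner_smul_right, real_inner_self_eq_norm_sq]
    rcases eq_or_ne ‖v‖ 0 with hv | hv
    · simp [hv]
    · field_simp
  have hzu : ‖z + u - x‖ < ρ := by
    calc ‖z + u - x‖ = ‖(z - x) + u‖ := by rw [sub_add_eq_add_sub]
      _ ≤ ‖z - x‖ + ‖u‖ := norm_add_le _ _
      _ < ρ := by linarith
  have hrem := hsmall (show dist (z + u) x < ρ by rwa [dist_eq_norm])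
  rw [Real.norm_eq_abs] at hrem
  have key := (hx.hasSubgradientAt hf).inner_sub_le (hG z) u
  rw [hvu] at key
  have : ρ / 2 * ‖v‖ ≤ ρ / 2 * (ε / 2) := by
    nlinarith [le_abs_self (f (z + u) - f x - ⟪p, z + u - x⟫)]
  rw [dist_eq_norm]
  nlinarith

theorem abs_sub_sub_inner_sub_le_of_hasSubgradientAt {G : V → V}
    (hG : ∀ z, HasSubgradientAt f (G z) z) {A : V →L[ℝ] V} {x h : V} {η : ℝ}
    (hη : ∀ t ∈ Icc (0 : ℝ) 1, ‖G (x + t • h) - G x - t • A h‖ ≤ η * ‖h‖) :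
    |f (x + h) - f x - ⟪G x, h⟫ - 1 / 2 * ⟪A h, h⟫| ≤ η * ‖h‖ ^ 2 := by
  set q := ⟪A h, h⟫
  set ψ : ℝ → ℝ := fun t => f (x + t • h) - t * ⟪G x, h⟫ - t ^ 2 / 2 * q
  have hlow : ∀ t ∈ Icc (0 : ℝ) 1, ∀ u,
      ψ t - ψ u ≤ η * ‖h‖ ^ 2 * |u - t| + |q| / 2 * (u - t) ^ 2 := by
    intro t ht u
    have hsub := hG (x + t • h) (x + u • h)
    rw [show x + u • h - (x + t • h) = (u - t) • h by module, real_inner_smul_right] at hsub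
    have hslope : |⟪G (x + t • h), h⟫ - ⟪G x, h⟫ - t * q| ≤ η * ‖h‖ ^ 2 := by
      have := abs_real_inner_le_norm (G (x + t • h) - G x - t • A h) h
      rw [inner_sub_left, inner_sub_left, real_inner_smul_left] at this
      nlinarith [mul_le_mul_of_nonneg_right (hη t ht) (norm_nonneg h)]
    have h₁ := neg_abs_le ((u - t) * (⟪G (x + t • h), h⟫ - ⟪G x, h⟫ - t * q))
    rw [abs_mul] at h₁
    have h₂ := mul_le_mul_of_nonneg_left hslope (abs_nonneg (u - t))
    have h₃ := mul_le_mul_of_nonneg_right (le_abs_self q) (sq_nonneg (u - t))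
    simp only [ψ]
    nlinarith
  have hψ := abs_sub_le_of_forall_abs_sub_le_mul_add_sq (ψ := ψ) zero_le_one fun t ht u hu =>
    abs_sub_le_iff.2 ⟨(hlow u hu t).trans_eq (by rw [abs_sub_comm]; ring), hlow t ht u⟩
  have hends : ψ 1 - ψ 0 = f (x + h) - f x - ⟪G x, h⟫ - 1 / 2 * q := by
    simp only [ψ, zero_smul, one_smul, add_zero]
    ring
  rwa [hends, sub_zero, mul_one] at hψ

theorem isLittleO_sq_of_hasFDerivAt_subgradient {G : V → V}
    (hG : ∀ z, HasSubgradientAt f (G z) z) {A : V →L[ℝ] V} {x : V} (hA : HasFDerivAt G A x) :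
    (fun h => f (x + h) - f x - ⟪G x, h⟫ - 1 / 2 * ⟪A h, h⟫) =o[𝓝 0] fun h => ‖h‖ ^ 2 := by
  refine isLittleO_iff.2 fun η hη => ?_
  obtain ⟨δ, hδ, hsmall⟩ := Metric.eventually_nhds_iff.1
    ((hasFDerivAt_iff_isLittleO_nhds_zero.1 hA).def hη)
  filter_upwards [ball_mem_nhds 0 hδ] with h hh
  rw [mem_ball_zero_iff] at hh
  rw [Real.norm_eq_abs, norm_pow, norm_norm]
  refine abs_sub_sub_inner_sub_le_of_hasSubgradientAt hG fun t ht => ?_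
  have hth : ‖t • h‖ ≤ ‖h‖ := by
    rw [norm_smul, Real.norm_of_nonneg ht.1]
    exact mul_le_of_le_one_left (norm_nonneg h) ht.2
  have := hsmall (y := t • h) (by rw [dist_zero_right]; exact hth.trans_lt hh)
  rw [map_smul] at this
  exact this.trans (mul_le_mul_of_nonneg_left hth hη.le)

end Subgradient

section Prox

variable {V : Type*} [NormedAddCommGroup V] [InnerProductSpace ℝ V] [FiniteDimensional ℝ V]
  {f : V → ℝ}

/-- Junk when no minimizer exists; `ConvexOn.prox_le` provides one for convex `f`. -/
def prox (f : V → ℝ) (y : V) : V :=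
  Classical.epsilon fun z => ∀ w, f z + ‖z - y‖ ^ 2 / 2 ≤ f w + ‖w - y‖ ^ 2 / 2

theorem ConvexOn.prox_le (hf : ConvexOn ℝ univ f) (y w : V) :
    f (prox f y) + ‖prox f y - y‖ ^ 2 / 2 ≤ f w + ‖w - y‖ ^ 2 / 2 := by
  refine Classical.epsilon_spec (p := fun z => ∀ w, f z + ‖z - y‖ ^ 2 / 2 ≤ f w + ‖w - y‖ ^ 2 / 2)
    ?_ w
  have hc := hf.locallyLipschitz.continuous
  obtain ⟨g, hg⟩ := hf.exists_hasSubgradientAt hc y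
  refine Continuous.exists_forall_le' (by fun_prop) y ?_
  -- Off the ball of radius `2 ‖g‖` about `y`, the objective exceeds its value at `y`.
  filter_upwards [(isCompact_closedBall y (2 * ‖g‖)).compl_mem_cocompact] with w hw
  rw [mem_compl_iff, mem_closedBall, dist_eq_norm, not_le] at hw
  have h₁ := hg w
  have h₂ := (abs_le.1 (abs_real_inner_le_norm g (w - y))).1
  simp only [sub_self, norm_zero]
  nlinarith [mul_le_mul_of_nonneg_left hw.le (norm_nonneg (w - y))]

theorem ConvexOn.hasSubgradientAt_prox (hf : ConvexOn ℝ univ f) (y : V) :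
    HasSubgradientAt f (y - prox f y) (prox f y) := by
  set z := prox f y
  intro w
  have key : 0 ≤ f w - f z + ⟪z - y, w - z⟫ := by
    refine nonneg_of_forall_nonneg_add_mul (b := ‖w - z‖ ^ 2 / 2) fun t ht => ?_
    have hmin := hf.prox_le y (z + t • (w - z))
    have hconv : f (z + t • (w - z)) ≤ (1 - t) * f z + t * f w := by
      have := hf.2 (mem_univ z) (mem_univ w) (sub_nonneg.2 ht.2.le) ht.1.le (sub_add_cancel 1 t)
      rwa [show (1 - t) • z + t • w = z + t • (w - z) by module, smul_eq_mul, smul_eq_mul] at this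
    have hnorm : ‖z + t • (w - z) - y‖ ^ 2
        = ‖z - y‖ ^ 2 + 2 * t * ⟪z - y, w - z⟫ + t ^ 2 * ‖w - z‖ ^ 2 := by
      rw [show z + t • (w - z) - y = (z - y) + t • (w - z) by abel, norm_add_sq_real,
        real_inner_smul_right, norm_smul, mul_pow, Real.norm_eq_abs, sq_abs]
      ring
    have : 0 ≤ t * ((f w - f z + ⟪z - y, w - z⟫) + t * (‖w - z‖ ^ 2 / 2)) := by nlinarith
    exact nonneg_of_mul_nonneg_right this ht.1
  rw [← neg_sub z y, inner_neg_left]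
  linarith

theorem ConvexOn.prox_add_of_hasSubgradientAt (hf : ConvexOn ℝ univ f) {g z : V}
    (hg : HasSubgradientAt f g z) : prox f (z + g) = z := by
  have := (hf.hasSubgradientAt_prox (z + g)).inner_sub_sub_nonneg hg
  rw [show z + g - prox f (z + g) - g = -(prox f (z + g) - z) by abel, inner_neg_left,
    real_inner_self_eq_norm_sq, neg_nonneg] at this
  exact sub_eq_zero.1 (norm_eq_zero.1 (pow_eq_zero_iff two_ne_zero |>.1
    (le_antisymm this (sq_nonneg _))))

theorem ConvexOn.norm_prox_sub_prox_sq_le (hf : ConvexOn ℝ univ f) (y y' : V) :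
    ‖prox f y - prox f y'‖ ^ 2 ≤ ⟪y - y', prox f y - prox f y'⟫ := by
  have := (hf.hasSubgradientAt_prox y).inner_sub_sub_nonneg (hf.hasSubgradientAt_prox y')
  rw [show y - prox f y - (y' - prox f y') = (y - y') - (prox f y - prox f y') by abel,
    inner_sub_left, real_inner_self_eq_norm_sq] at this
  linarith

theorem ConvexOn.lipschitzWith_prox (hf : ConvexOn ℝ univ f) : LipschitzWith 1 (prox f) := by
  refine LipschitzWith.of_dist_le_mul fun y y' => ?_
  rw [NNReal.coe_one, one_mul, dist_eq_norm, dist_eq_norm]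
  have := (hf.norm_prox_sub_prox_sq_le y y').trans (real_inner_le_norm _ _)
  nlinarith [norm_nonneg (prox f y - prox f y'), norm_nonneg (y - y')]

/-- `‖y‖² / 2` minus the Moreau envelope of `f`; by `ConvexOn.le_proxPotential` it is the
convex conjugate of `f + ‖·‖² / 2`. -/
def proxPotential (f : V → ℝ) (y : V) : ℝ :=
  ⟪prox f y, y⟫ - f (prox f y) - ‖prox f y‖ ^ 2 / 2

theorem ConvexOn.le_proxPotential (hf : ConvexOn ℝ univ f) (y w : V) :
    ⟪w, y⟫ - f w - ‖w‖ ^ 2 / 2 ≤ proxPotential f y := by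
  have := hf.prox_le y w
  rw [norm_sub_sq_real, norm_sub_sq_real] at this
  unfold proxPotential
  linarith

theorem ConvexOn.hasFDerivAt_proxPotential (hf : ConvexOn ℝ univ f) (y : V) :
    HasFDerivAt (proxPotential f) (innerSL ℝ (prox f y)) y := by
  have hlow : ∀ y', 0 ≤ proxPotential f y' - proxPotential f y - ⟪prox f y, y' - y⟫ := by
    intro y'
    have := hf.le_proxPotential y' (prox f y)
    rw [inner_sub_right]
    unfold proxPotential at this ⊢
    linarith
  have hup : ∀ y', proxPotential f y' - proxPotential f y - ⟪prox f y, y' - y⟫ ≤ ‖y' - y‖ ^ 2 := by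
    intro y'
    have h₁ := hf.le_proxPotential y (prox f y')
    have h₂ := real_inner_le_norm (prox f y' - prox f y) (y' - y)
    have h₃ := hf.lipschitzWith_prox.norm_sub_le y' y
    rw [NNReal.coe_one, one_mul] at h₃
    rw [inner_sub_left, inner_sub_right, inner_sub_right] at h₂
    rw [inner_sub_right]
    unfold proxPotential at h₁ ⊢
    nlinarith [mul_le_mul_of_nonneg_right h₃ (norm_nonneg (y' - y))]
  rw [hasFDerivAt_iff_isLittleO]
  refine IsBigO.trans_isLittleO (g := fun y' => ‖y' - y‖ ^ 2) ?_ ?_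
  · refine IsBigO.of_bound 1 (Eventually.of_forall fun y' => ?_)
    rw [innerSL_apply_apply, Real.norm_eq_abs, abs_of_nonneg (hlow y'), norm_pow, norm_norm,
      one_mul]
    exact hup y'
  · exact (isLittleO_norm_pow_id one_lt_two).comp_tendsto (tendsto_sub_nhds_zero_iff.2 tendsto_id)

theorem ConvexOn.isSymmetric_of_hasFDerivAt_prox (hf : ConvexOn ℝ univ f) {D : V →L[ℝ] V} {y : V}
    (hD : HasFDerivAt (prox f) D y) : (D : V →ₗ[ℝ] V).IsSymmetric := by
  intro v w
  have := second_derivative_symmetric_of_eventually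
    (Eventually.of_forall hf.hasFDerivAt_proxPotential) ((innerSL ℝ).hasFDerivAt.comp y hD) v w
  rw [ContinuousLinearMap.comp_apply, ContinuousLinearMap.comp_apply, innerSL_apply_apply,
    innerSL_apply_apply] at this
  rw [ContinuousLinearMap.coe_coe, this, real_inner_comm]

theorem ConvexOn.hasFDerivAt_subgradient (hf : ConvexOn ℝ univ f) {G : V → V}
    (hG : ∀ z, HasSubgradientAt f (G z) z) {x p : V} (hx : HasGradientAt f p x) {D : V ≃L[ℝ] V}
    (hD : HasFDerivAt (prox f) (D : V →L[ℝ] V) (x + p)) :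
    HasFDerivAt G ((D.symm : V →L[ℝ] V) - ContinuousLinearMap.id ℝ V) x := by
  have hGp := hx.tendsto_subgradient hf hG
  have hGx : G x = p := eq_of_tendsto_nhds hGp
  have hright : HasFDerivAt (fun z => z + G z) (D.symm : V →L[ℝ] V) x := by
    refine HasFDerivAt.of_local_left_inverse (continuousAt_id.add (by rwa [ContinuousAt, hGx]))
      (by rwa [hGx]) (Eventually.of_forall fun z => hf.prox_add_of_hasSubgradientAt (hG z))
  convert hright.sub (hasFDerivAt_id x) using 1
  ext z
  simp

end Prox

section Measure

variable {V : Type*} [NormedAddCommGroup V] [NormedSpace ℝ V] [FiniteDimensional ℝ V]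
  [MeasurableSpace V] [BorelSpace V] {μ : Measure V} [μ.IsAddHaarMeasure]

theorem LipschitzWith.addHaar_image_eq_zero {K : NNReal} {g : V → V} (hg : LipschitzWith K g)
    {s : Set V} (hs : μ s = 0) : μ (g '' s) = 0 := by
  set d := (Module.finrank ℝ V : ℝ)
  have hH : μH[d] s = 0 := by
    rw [Measure.isAddLeftInvariant_eq_smul μH[d] μ, Measure.smul_apply, hs, smul_zero]
  have hHg : μH[d] (g '' s) = 0 := by
    have := hg.hausdorffMeasure_image_le (d := d) (Nat.cast_nonneg _) s
    rw [hH, mul_zero] at this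
    exact le_antisymm this zero_le
  rw [Measure.isAddLeftInvariant_eq_smul μ μH[d], Measure.smul_apply, hHg, smul_zero]

theorem LocallyLipschitz.ae_differentiableAt {W : Type*} [NormedAddCommGroup W] [NormedSpace ℝ W]
    [FiniteDimensional ℝ W] {g : V → W} (hg : LocallyLipschitz g) :
    ∀ᵐ x ∂μ, DifferentiableAt ℝ g x := by
  have hball : ∀ k : ℕ, ∀ᵐ x ∂μ, x ∈ ball (0 : V) k → DifferentiableAt ℝ g x := by
    intro k
    obtain ⟨K, hK⟩ := hg.locallyLipschitzOn.exists_lipschitzOnWith_of_compact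
      (isCompact_closedBall (0 : V) k)
    filter_upwards [(hK.mono ball_subset_closedBall).ae_differentiableWithinAt_of_mem]
      with x hx hxk
    exact (hx hxk).differentiableAt (isOpen_ball.mem_nhds hxk)
  filter_upwards [ae_all_iff.2 hball] with x hx
  obtain ⟨k, hk⟩ := exists_nat_gt ‖x‖
  exact hx k (mem_ball_zero_iff.2 hk)

theorem LipschitzWith.ae_forall_apply_eq_exists_hasFDerivAt_equiv {K : NNReal} {g : V → V}
    (hg : LipschitzWith K g) :
    ∀ᵐ x ∂μ, ∀ y, g y = x → ∃ D : V ≃L[ℝ] V, HasFDerivAt g (D : V →L[ℝ] V) y := by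
  set N := {y | ¬ DifferentiableAt ℝ g y}
  set Z := {y | DifferentiableAt ℝ g y ∧ (fderiv ℝ g y).det = 0}
  have hN : μ (g '' N) = 0 := hg.addHaar_image_eq_zero (ae_iff.1 hg.ae_differentiableAt)
  have hZ : μ (g '' Z) = 0 := addHaar_image_eq_zero_of_det_fderivWithin_eq_zero μ
    (fun y hy => hy.1.hasFDerivAt.hasFDerivWithinAt) fun y hy => hy.2
  filter_upwards [measure_eq_zero_iff_ae_notMem.1 (measure_union_null hN hZ)] with x hx y rfl
  have hd : DifferentiableAt ℝ g y := by_contra fun h => hx (Or.inl ⟨y, h, rfl⟩)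
  have hdet : (fderiv ℝ g y).det ≠ 0 := fun h => hx (Or.inr ⟨y, ⟨hd, h⟩, rfl⟩)
  refine ⟨(LinearMap.equivOfDetNeZero _ hdet).toContinuousLinearEquiv, ?_⟩
  convert hd.hasFDerivAt
  ext v
  rfl

end Measure

theorem alexandrov_general (n : ℕ) (f : E n → ℝ)
    (hf : ConvexOn ℝ Set.univ f) :
    ∀ᵐ x ∂(volume : Measure (E n)), ∃ (p : E n) (A : E n →ₗ[ℝ] E n),
      A.IsSymmetric ∧
      (fun h : E n => f (x + h) - f x - ⟪p, h⟫ - (1 / 2) * ⟪A h, h⟫)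
        =o[𝓝 (0 : E n)] fun h => ‖h‖ ^ 2 := by
  choose G hG using hf.exists_hasSubgradientAt hf.locallyLipschitz.continuous
  filter_upwards [hf.locallyLipschitz.ae_differentiableAt,
    hf.lipschitzWith_prox.ae_forall_apply_eq_exists_hasFDerivAt_equiv] with x hdiff hgood
  have hx := hdiff.hasGradientAt
  obtain ⟨D, hD⟩ := hgood _ (hf.prox_add_of_hasSubgradientAt (hx.hasSubgradientAt hf))
  have hA := hf.hasFDerivAt_subgradient hG hx hD
  refine ⟨G x, _, ?_, isLittleO_sq_of_hasFDerivAt_subgradient hG hA⟩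
  have hDsymm : LinearMap.IsSymmetric (D.toLinearEquiv : E n →ₗ[ℝ] E n) :=
    hf.isSymmetric_of_hasFDerivAt_prox hD
  exact hDsymm.toLinearMap_symm.sub LinearMap.IsSymmetric.id

/-- Alexandrov's theorem: a convex function on ℝ^n admits, at Lebesgue-almost every
point, a second-order Taylor expansion with a symmetric second-order term. -/
theorem alexandrov (n : ℕ) (hn : 1 ≤ n) (f : E n → ℝ)
    (hf : ConvexOn ℝ Set.univ f) :
    ∀ᵐ x ∂(volume : Measure (E n)), ∃ (p : E n) (A : E n →ₗ[ℝ] E n),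
      A.IsSymmetric ∧
      (fun h : E n => f (x + h) - f x - ⟪p, h⟫ - (1 / 2) * ⟪A h, h⟫)
        =o[𝓝 (0 : E n)] fun h => ‖h‖ ^ 2 :=
  alexandrov_general n f hf
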